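/- For the Gauss measure μ and the constant-word cylinders Δ_k(λ), the total mass summed over all digit values decays like the golden-ratio rate: for every k ≥ 1, Σ_{λ=1}^{∞} μ(Δ_k(λ)) ≤ φ^{−2(k−1)}, where φ = (1+√5)/2. -/

import Mathlib

open Real
/-- One step of the Gauss map iteration: `gaussIter n x = G^n(x)` where `G y = {1/y}`. -/
noncomputable def gaussIter (n : ℕ) (x : ℝ) : ℝ := (fun y => Int.fract y⁻¹)^[n] x

/-- `pq n x` is the `(n+1)`-st continued fraction partial quotient `a_{n+1}(x)`. -/
noncomputable def pq (n : ℕ) (x : ℝ) : ℕ := ⌊(gaussIter n x)⁻¹⌋₊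

/-- The rank-`k` cylinder `Δ(d_1, …, d_k)`, where `d i` stands for `d_{i+1}`. -/
noncomputable def cfCyl (k : ℕ) (d : ℕ → ℕ) : Set ℝ :=
  {x | x ∈ Set.Ioo (0 : ℝ) 1 ∧ Irrational x ∧ ∀ i < k, pq i x = d i}

/-- The constant-word cylinder `Δ_k(λ)`. -/
noncomputable def cfCylC (k : ℕ) (l : ℕ) : Set ℝ := cfCyl k (fun _ => l)

open MeasureTheory

/-- The Gauss measure `μ(A) = (1/log 2) ∫_A dx/(1+x)` on `[0,1)`. -/
noncomputable def gaussMeasure : Measure ℝ :=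
  (volume.restrict (Set.Ico (0 : ℝ) 1)).withDensity
    (fun x => ENNReal.ofReal (((1 + x) * Real.log 2)⁻¹))

/-!
Write `T_λ t = 1/(λ + t)` for the inverse branch of the Gauss map on the digit `λ`. Every point of
`Δ_k(λ)` is `T_λ^k` of a point of `(0,1)`, so `Δ_k(λ)` lies between `T_λ^k 0` and `T_λ^k 1`, and as
the Gauss density is at most `1/log 2` we get `μ(Δ_k(λ)) ≤ |T_λ^k 0 - T_λ^k 1| / log 2`.

For `λ = 1` the endpoints are ratios of consecutive Fibonacci numbers, and by Cassini's identity
the gap is `1/(F_{k+1} F_{k+2})`, which Binet's formula bounds by `5/(φ^{2k+3} - 2)`. For `λ ≥ 2`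
the branch contracts by `λ^{-2}`, and the gaps are dominated by a telescoping series of total mass
`φ^{-2(k-2)}/14`. The two contributions fit under `φ^{-2(k-1)}` because `log 2 > 0.69`.
For `k = 1` the cylinders are disjoint and `μ` is a probability measure.
-/

open Set

noncomputable def gaussBranch (c t : ℝ) : ℝ := (c + t)⁻¹

section gaussBranch

variable {c : ℝ} (hc : 0 < c)
include hc

lemma gaussBranch_mapsTo_Ici : MapsTo (gaussBranch c) (Ici 0) (Ici 0) := fun _ ht =>
  (inv_pos.2 (add_pos_of_pos_of_nonneg hc ht)).le

lemma gaussBranch_antitoneOn : AntitoneOn (gaussBranch c) (Ici 0) := fun a ha _ _ hab =>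
  inv_anti₀ (add_pos_of_pos_of_nonneg hc ha) (by gcongr)

lemma abs_gaussBranch_sub_le {a b : ℝ} (ha : 0 ≤ a) (hb : 0 ≤ b) :
    |gaussBranch c a - gaussBranch c b| ≤ |a - b| / c ^ 2 := by
  have hca : 0 < c + a := by linarith
  have hcb : 0 < c + b := by linarith
  have h : gaussBranch c a - gaussBranch c b = (b - a) / ((c + a) * (c + b)) := by
    unfold gaussBranch; field_simp; ring
  rw [h, abs_div, abs_sub_comm, abs_of_pos (mul_pos hca hcb)]
  gcongr
  nlinarith

lemma abs_gaussBranch_iterate_sub_le {a b : ℝ} (ha : 0 ≤ a) (hb : 0 ≤ b) (k : ℕ) :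
    |(gaussBranch c)^[k] a - (gaussBranch c)^[k] b| ≤ |a - b| / c ^ (2 * k) := by
  induction k with
  | zero => simp
  | succ k ih =>
    rw [Function.iterate_succ_apply', Function.iterate_succ_apply']
    calc _ ≤ |(gaussBranch c)^[k] a - (gaussBranch c)^[k] b| / c ^ 2 :=
          abs_gaussBranch_sub_le hc ((gaussBranch_mapsTo_Ici hc).iterate k ha)
            ((gaussBranch_mapsTo_Ici hc).iterate k hb)
      _ ≤ |a - b| / c ^ (2 * k) / c ^ 2 := by gcongr
      _ = |a - b| / c ^ (2 * (k + 1)) := by ring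

lemma abs_gaussBranch_iterate_succ_sub_le (k : ℕ) :
    |(gaussBranch c)^[k + 1] 0 - (gaussBranch c)^[k + 1] 1| ≤ (c * (c + 1))⁻¹ / c ^ (2 * k) := by
  have h01 : gaussBranch c 0 - gaussBranch c 1 = (c * (c + 1))⁻¹ := by
    unfold gaussBranch; field_simp; ring
  rw [Function.iterate_succ_apply, Function.iterate_succ_apply]
  calc _ ≤ |gaussBranch c 0 - gaussBranch c 1| / c ^ (2 * k) :=
        abs_gaussBranch_iterate_sub_le hc (gaussBranch_mapsTo_Ici hc (mem_Ici.2 le_rfl))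
          (gaussBranch_mapsTo_Ici hc (mem_Ici.2 zero_le_one)) k
    _ = _ := by rw [h01, abs_of_pos (by positivity)]

end gaussBranch

lemma gaussIter_succ (n : ℕ) (x : ℝ) : gaussIter (n + 1) x = gaussIter n (Int.fract x⁻¹) :=
  Function.iterate_succ_apply _ n x

lemma cfCylC_succ_subset_image (k l : ℕ) :
    cfCylC (k + 1) l ⊆ gaussBranch l '' cfCylC k l := by
  rintro x ⟨⟨hx0, hx1⟩, hirr, hd⟩
  have hfloor : ⌊x⁻¹⌋₊ = l := hd 0 k.succ_pos
  have hy : Irrational (Int.fract x⁻¹) := by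
    rw [Int.fract]; exact hirr.inv.sub_intCast _
  refine ⟨Int.fract x⁻¹, ⟨⟨lt_of_le_of_ne (Int.fract_nonneg _) hy.ne_zero.symm,
    Int.fract_lt_one _⟩, hy, fun i hi => ?_⟩, ?_⟩
  · simpa only [pq, gaussIter_succ] using hd (i + 1) (by omega)
  · rw [gaussBranch, ← hfloor, natCast_floor_eq_intCast_floor (inv_pos.2 hx0).le,
      Int.floor_add_fract, inv_inv]

lemma cfCylC_subset_uIcc {l : ℕ} (hl : 0 < l) (k : ℕ) :
    cfCylC k l ⊆ uIcc ((gaussBranch l)^[k] 0) ((gaussBranch l)^[k] 1) := by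
  have hc : (0 : ℝ) < l := by exact_mod_cast hl
  induction k with
  | zero =>
    rintro x ⟨⟨hx0, hx1⟩, -, -⟩
    rw [Function.iterate_zero_apply, Function.iterate_zero_apply, uIcc_of_le zero_le_one]
    exact ⟨hx0.le, hx1.le⟩
  | succ k ih =>
    have h0 := (gaussBranch_mapsTo_Ici hc).iterate k (le_refl (0 : ℝ))
    have h1 := (gaussBranch_mapsTo_Ici hc).iterate k (zero_le_one' ℝ)
    rw [Function.iterate_succ_apply', Function.iterate_succ_apply']
    refine (cfCylC_succ_subset_image k l).trans ((image_mono ih).trans ?_)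
    exact ((gaussBranch_antitoneOn hc).mono fun _ hy => (le_min h0 h1).trans hy.1).image_uIcc_subset

lemma gaussMeasure_le_volume (s : Set ℝ) :
    gaussMeasure s ≤ ENNReal.ofReal (Real.log 2)⁻¹ * volume s := by
  have hdens : ∀ᵐ x ∂volume.restrict (Ico (0 : ℝ) 1),
      ENNReal.ofReal (((1 + x) * Real.log 2)⁻¹) ≤ ENNReal.ofReal (Real.log 2)⁻¹ := by
    filter_upwards [ae_restrict_mem measurableSet_Ico] with x hx
    have hL := Real.log_pos one_lt_two
    exact ENNReal.ofReal_le_ofReal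
      (inv_anti₀ hL (le_mul_of_one_le_left hL.le (by linarith [hx.1])))
  calc gaussMeasure s ≤ (ENNReal.ofReal (Real.log 2)⁻¹ • volume.restrict (Ico (0 : ℝ) 1)) s := by
        rw [← withDensity_const]; exact withDensity_mono hdens s
    _ ≤ ENNReal.ofReal (Real.log 2)⁻¹ * volume s := by
        rw [Measure.smul_apply, smul_eq_mul]; gcongr; exact Measure.restrict_le_self

lemma gaussMeasure_cfCylC_le {l : ℕ} (hl : 0 < l) (k : ℕ) :
    gaussMeasure (cfCylC k l) ≤
      ENNReal.ofReal ((Real.log 2)⁻¹ * |(gaussBranch l)^[k] 0 - (gaussBranch l)^[k] 1|) := by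
  calc gaussMeasure (cfCylC k l)
      ≤ gaussMeasure (uIcc ((gaussBranch l)^[k] 0) ((gaussBranch l)^[k] 1)) :=
        measure_mono (cfCylC_subset_uIcc hl k)
    _ ≤ _ := by
        rw [ENNReal.ofReal_mul (inv_nonneg.2 (Real.log_nonneg one_le_two)), abs_sub_comm,
          ← Real.volume_interval]
        exact gaussMeasure_le_volume _

lemma gaussMeasure_univ : gaussMeasure univ = 1 := by
  have hint : ∫ x in (0 : ℝ)..1, ((1 + x) * Real.log 2)⁻¹ = 1 := by
    simp_rw [mul_inv, intervalIntegral.integral_mul_const,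
      intervalIntegral.integral_comp_add_left (fun u : ℝ => u⁻¹) 1]
    rw [integral_inv_of_pos (by norm_num) (by norm_num)]
    norm_num [Real.log_pos one_lt_two |>.ne']
  have hcont : ContinuousOn (fun x : ℝ => ((1 + x) * Real.log 2)⁻¹) (Icc 0 1) :=
    ContinuousOn.inv₀ (by fun_prop) fun x hx =>
      (mul_pos (by linarith [hx.1]) (Real.log_pos one_lt_two)).ne'
  rw [gaussMeasure, withDensity_apply _ MeasurableSet.univ, Measure.restrict_univ,
    ← ofReal_integral_eq_lintegral_ofReal ((hcont.integrableOn_Icc).mono_set Ico_subset_Icc_self),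
    integral_Ico_eq_integral_Ioo, ← integral_Ioc_eq_integral_Ioo,
    ← intervalIntegral.integral_of_le zero_le_one, hint, ENNReal.ofReal_one]
  filter_upwards [ae_restrict_mem measurableSet_Ico] with x hx
  exact (inv_pos.2 (mul_pos (by linarith [hx.1]) (Real.log_pos one_lt_two))).le

lemma measurable_pq (n : ℕ) : Measurable (pq n) :=
  Nat.measurable_floor.comp <| measurable_inv.comp <|
    (measurable_fract.comp measurable_inv).iterate n

lemma measurableSet_cfCyl (k : ℕ) (d : ℕ → ℕ) : MeasurableSet (cfCyl k d) := by
  refine measurableSet_Ioo.inter (((countable_range ((↑) : ℚ → ℝ)).measurableSet.compl).inter ?_)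
  show MeasurableSet {x | ∀ i < k, pq i x = d i}
  simp only [ofPred_forall]
  exact MeasurableSet.iInter fun i => MeasurableSet.iInter fun _ =>
    measurable_pq i (measurableSet_singleton (d i))

lemma pairwise_disjoint_cfCylC {k : ℕ} (hk : 0 < k) :
    Pairwise (Function.onFun Disjoint (cfCylC k)) :=
  fun _ _ hne => disjoint_left.2 fun _ hx hx' => hne ((hx.2.2 0 hk).symm.trans (hx'.2.2 0 hk))

lemma tsum_gaussMeasure_cfCylC_le_one {k : ℕ} (hk : 0 < k) :
    ∑' l, gaussMeasure (cfCylC k l) ≤ 1 :=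
  (tsum_meas_le_meas_iUnion_of_disjoint _ (fun _ => measurableSet_cfCyl _ _)
    (pairwise_disjoint_cfCylC hk)).trans (gaussMeasure_univ ▸ measure_mono (subset_univ _))

open goldenRatio

lemma gaussBranch_one_iterate_zero (k : ℕ) :
    (gaussBranch 1)^[k] 0 = (Nat.fib k : ℝ) / Nat.fib (k + 1) := by
  induction k with
  | zero => simp
  | succ k ih =>
    have hfib : (Nat.fib (k + 1) : ℝ) ≠ 0 := by exact_mod_cast (Nat.fib_pos.2 k.succ_pos).ne'
    rw [Function.iterate_succ_apply', ih, gaussBranch, Nat.fib_add_two, Nat.cast_add]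
    field_simp
    ring

lemma abs_gaussBranch_one_iterate_sub (k : ℕ) :
    |(gaussBranch 1)^[k] 0 - (gaussBranch 1)^[k] 1| =
      ((Nat.fib (k + 1) : ℝ) * Nat.fib (k + 2))⁻¹ := by
  have hone : (gaussBranch 1)^[k] 1 = (gaussBranch 1)^[k + 1] 0 := by
    rw [Function.iterate_succ_apply]; norm_num [gaussBranch]
  have hcassini : (Nat.fib (k + 2) : ℝ) * Nat.fib k - Nat.fib (k + 1) ^ 2 = (-1) ^ (k + 1) := by
    have h := Int.fib_succ_mul_fib_pred_sub_fib_sq ((k + 1 : ℕ) : ℤ)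
    rw [show ((k + 1 : ℕ) : ℤ) + 1 = ((k + 2 : ℕ) : ℤ) by push_cast; ring,
      show ((k + 1 : ℕ) : ℤ) - 1 = (k : ℤ) by push_cast; ring, Int.fib_natCast, Int.fib_natCast,
      Int.fib_natCast, Int.natAbs_natCast] at h
    exact_mod_cast h
  have h1 : (0 : ℝ) < Nat.fib (k + 1) := by exact_mod_cast Nat.fib_pos.2 k.succ_pos
  have h2 : (0 : ℝ) < Nat.fib (k + 2) := by exact_mod_cast Nat.fib_pos.2 (k + 1).succ_pos
  rw [hone, gaussBranch_one_iterate_zero, gaussBranch_one_iterate_zero,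
    div_sub_div _ _ h1.ne' h2.ne', abs_div, abs_of_pos (mul_pos h1 h2), ← sq,
    show (Nat.fib k : ℝ) * Nat.fib (k + 2) - Nat.fib (k + 1) ^ 2 = (-1) ^ (k + 1) by
      linear_combination hcassini, abs_neg_one_pow, one_div]

lemma goldenRatio_pow_sub_two_le_five_mul_fib_mul_fib (k : ℕ) :
    φ ^ (2 * k + 3) - 2 ≤ 5 * ((Nat.fib (k + 1) : ℝ) * Nat.fib (k + 2)) := by
  have hbinet : 5 * ((Nat.fib (k + 1) : ℝ) * Nat.fib (k + 2)) =
      φ ^ (2 * k + 3) + ψ ^ (2 * k + 3) - (-1) ^ (k + 1) := by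
    have h5 : √5 ^ 2 = 5 := Real.sq_sqrt (by norm_num)
    have hprod : φ ^ (k + 1) * ψ ^ (k + 1) = (-1) ^ (k + 1) := by
      rw [← mul_pow, goldenRatio_mul_goldenConj]
    rw [coe_fib_eq, coe_fib_eq, div_mul_div_comm, ← sq, h5, mul_div_cancel₀ _ (by norm_num)]
    linear_combination (-(φ + ψ)) * hprod - (-1) ^ (k + 1) * goldenRatio_add_goldenConj
  have hψ : -1 ≤ ψ ^ (2 * k + 3) := by
    have habs : |ψ| ≤ 1 := abs_le.2 ⟨neg_one_lt_goldenConj.le, goldenConj_neg.le.trans zero_le_one⟩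
    exact (abs_le.1 (abs_pow ψ _ ▸ pow_le_one₀ (abs_nonneg ψ) habs)).1
  have hsign : (-1 : ℝ) ^ (k + 1) ≤ 1 := (le_abs_self _).trans (abs_neg_one_pow _).le
  linarith

lemma abs_gaussBranch_iterate_sub_le_of_two_le {c : ℝ} (hc : 2 ≤ c) (m : ℕ) :
    |(gaussBranch c)^[m + 2] 0 - (gaussBranch c)^[m + 2] 1| ≤
      ((φ ^ 2) ^ m)⁻¹ / 14 * (((c - 1) ^ 2)⁻¹ - (c ^ 2)⁻¹) := by
  have hc0 : 0 < c := by linarith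
  have hpow : ((c ^ 2) ^ m)⁻¹ ≤ ((φ ^ 2) ^ m)⁻¹ := by
    gcongr
    exact goldenRatio_lt_two.le.trans hc
  -- `14` is the largest integer that works for all real `c ≥ 2`; the final estimate needs `13`.
  have htele : (c * (c + 1))⁻¹ / c ^ 2 ≤ (((c - 1) ^ 2)⁻¹ - (c ^ 2)⁻¹) / 14 := by
    have hc1 : 0 < c - 1 := by linarith
    have hpoly : 14 * (c - 1) ^ 2 ≤ (2 * c - 1) * c * (c + 1) := by
      nlinarith [mul_nonneg (mul_nonneg (sub_nonneg.2 hc) (sub_nonneg.2 hc)) (sub_nonneg.2 hc)]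
    rw [inv_sub_inv (by positivity) (by positivity), div_div, inv_eq_one_div, div_div,
      div_le_div_iff₀ (by positivity) (by positivity)]
    nlinarith [mul_le_mul_of_nonneg_right hpoly (sq_nonneg c)]
  calc _ ≤ (c * (c + 1))⁻¹ / c ^ (2 * (m + 1)) := abs_gaussBranch_iterate_succ_sub_le hc0 (m + 1)
    _ = ((c ^ 2) ^ m)⁻¹ * ((c * (c + 1))⁻¹ / c ^ 2) := by ring
    _ ≤ ((φ ^ 2) ^ m)⁻¹ * ((((c - 1) ^ 2)⁻¹ - (c ^ 2)⁻¹) / 14) := by gcongr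
    _ = _ := by ring

lemma ENNReal.tsum_ofReal_sub_succ_le {f : ℕ → ℝ} (hf : Antitone f) (hf0 : ∀ n, 0 ≤ f n) :
    ∑' n, ENNReal.ofReal (f n - f (n + 1)) ≤ ENNReal.ofReal (f 0) := by
  refine ENNReal.tsum_le_of_sum_range_le fun n => ?_
  rw [← ENNReal.ofReal_sum_of_nonneg fun i _ => sub_nonneg.2 (hf i.le_succ),
    Finset.sum_range_sub']
  exact ENNReal.ofReal_le_ofReal (sub_le_self _ (hf0 n))

lemma tsum_gaussMeasure_cfCylC_add_two_le (m : ℕ) :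
    ∑' l, gaussMeasure (cfCylC (m + 2) (l + 2)) ≤
      ENNReal.ofReal ((Real.log 2)⁻¹ * ((φ ^ 2) ^ m)⁻¹ / 14) := by
  set C := (Real.log 2)⁻¹ * ((φ ^ 2) ^ m)⁻¹ / 14
  set f : ℕ → ℝ := fun n => C / ((n : ℝ) + 1) ^ 2 with hf
  have hanti : Antitone f := fun a b hab => by simp only [hf]; gcongr
  have hterm (l : ℕ) :
      gaussMeasure (cfCylC (m + 2) (l + 2)) ≤ ENNReal.ofReal (f l - f (l + 1)) := by
    have hgap := abs_gaussBranch_iterate_sub_le_of_two_le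
      (c := (l : ℝ) + 2) (by linarith [l.cast_nonneg (α := ℝ)]) m
    have hcyl := gaussMeasure_cfCylC_le (l := l + 2) (by omega) (m + 2)
    rw [Nat.cast_add, Nat.cast_ofNat] at hcyl
    refine hcyl.trans (ENNReal.ofReal_le_ofReal ?_)
    calc _ ≤ (Real.log 2)⁻¹ *
          (((φ ^ 2) ^ m)⁻¹ / 14 * ((((l : ℝ) + 2 - 1) ^ 2)⁻¹ - (((l : ℝ) + 2) ^ 2)⁻¹)) := by
          gcongr
      _ = f l - f (l + 1) := by simp only [hf, Nat.cast_add, Nat.cast_one]; ring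
  calc ∑' l, gaussMeasure (cfCylC (m + 2) (l + 2))
      ≤ ∑' l, ENNReal.ofReal (f l - f (l + 1)) := ENNReal.tsum_le_tsum hterm
    _ ≤ ENNReal.ofReal (f 0) := ENNReal.tsum_ofReal_sub_succ_le hanti fun n => by positivity
    _ = ENNReal.ofReal C := by simp [hf]

lemma gaussMeasure_cfCylC_one_le (k : ℕ) :
    gaussMeasure (cfCylC k 1) ≤
      ENNReal.ofReal ((Real.log 2)⁻¹ * ((Nat.fib (k + 1) : ℝ) * Nat.fib (k + 2))⁻¹) := by
  simpa only [Nat.cast_one, abs_gaussBranch_one_iterate_sub] using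
    gaussMeasure_cfCylC_le one_pos k

lemma goldenRatio_mem_Ioo : φ ∈ Ioo (1.61 : ℝ) 1.62 := by
  have hlo : (2.22 : ℝ) < √5 := Real.lt_sqrt_of_sq_lt (by norm_num)
  have hhi : √5 < 2.24 := (Real.sqrt_lt' (by norm_num)).2 (by norm_num)
  have hφ : φ = (1 + √5) / 2 := rfl
  constructor <;> linarith

lemma inv_log_two_mul_inv_fib_mul_fib_add_le (m : ℕ) :
    (Real.log 2)⁻¹ * ((Nat.fib (m + 3) : ℝ) * Nat.fib (m + 4))⁻¹ +
      (Real.log 2)⁻¹ * ((φ ^ 2) ^ m)⁻¹ / 14 ≤ ((φ ^ 2) ^ (m + 1))⁻¹ := by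
  set X := (φ ^ 2) ^ m with hX
  have hX1 : 1 ≤ X := one_le_pow₀ (one_le_pow₀ one_lt_goldenRatio.le)
  have hL : 0.69 < Real.log 2 := lt_trans (by norm_num) Real.log_two_gt_d9
  obtain ⟨hφlo, hφhi⟩ := goldenRatio_mem_Ioo
  have hfib : X * (13 * φ + 6) ≤ 5 * ((Nat.fib (m + 3) : ℝ) * Nat.fib (m + 4)) := by
    have h7 : φ ^ (2 * (m + 2) + 3) = X * (13 * φ + 8) := by
      rw [show 2 * (m + 2) + 3 = 2 * m + 7 by ring, pow_add, pow_mul]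
      linear_combination X * (φ ^ 5 + φ ^ 4 + 2 * φ ^ 3 + 3 * φ ^ 2 + 5 * φ + 8) * goldenRatio_sq
    have := goldenRatio_pow_sub_two_le_five_mul_fib_mul_fib (m + 2)
    rw [h7] at this
    linarith
  have hnum : (5 / (13 * φ + 6) + 1 / 14) * φ ^ 2 ≤ Real.log 2 := by
    rw [goldenRatio_sq, div_add_div _ _ (by positivity) (by norm_num), div_mul_eq_mul_div,
      div_le_iff₀ (by positivity)]
    nlinarith
  have ha : 0 < 13 * φ + 6 := by linarith
  generalize 13 * φ + 6 = a at ha hfib hnum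
  calc _ ≤ (Real.log 2)⁻¹ * (5 / (X * a)) + (Real.log 2)⁻¹ * X⁻¹ / 14 := by
        gcongr
        rw [← inv_div]
        exact inv_anti₀ (by positivity) (by linarith)
    _ = (Real.log 2)⁻¹ * X⁻¹ * (5 / a + 1 / 14) := by ring
    _ ≤ (Real.log 2)⁻¹ * X⁻¹ * (Real.log 2 / φ ^ 2) := by
        gcongr
        rw [le_div_iff₀ (by positivity)]
        exact hnum
    _ = ((φ ^ 2) ^ (m + 1))⁻¹ := by
        rw [pow_succ (φ ^ 2) m, ← hX]
        field_simp [(Real.log_pos one_lt_two).ne']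

/-- Summed over all digit values, the Gauss measures of the constant-word cylinders
decay at the golden-ratio rate: `Σ_{λ≥1} μ(Δ_k(λ)) ≤ φ^{-2(k-1)}`. -/
theorem gaussMeasure_cfCylC_tsum_le (k : ℕ) (hk : 1 ≤ k) :
    ∑' l : ℕ, gaussMeasure (cfCylC k (l + 1)) ≤
      ENNReal.ofReal (((1 + Real.sqrt 5) / 2) ^ (-(2 * ((k : ℤ) - 1)))) := by
  rcases k with _ | _ | m
  · omega
  · rw [Nat.cast_one, sub_self, mul_zero, neg_zero, zpow_zero, ENNReal.ofReal_one]
    exact (ENNReal.tsum_comp_le_tsum_of_injective (add_left_injective 1) _).trans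
      (tsum_gaussMeasure_cfCylC_le_one one_pos)
  · have hexp : -(2 * (((m + 2 : ℕ) : ℤ) - 1)) = 2 * -((m + 1 : ℕ) : ℤ) := by push_cast; ring
    rw [tsum_eq_zero_add' ENNReal.summable, hexp, zpow_mul, zpow_neg, zpow_natCast, zpow_ofNat]
    refine (add_le_add (gaussMeasure_cfCylC_one_le (m + 2))
      (tsum_gaussMeasure_cfCylC_add_two_le m)).trans ?_
    rw [← ENNReal.ofReal_add (by positivity) (by positivity)]
    exact ENNReal.ofReal_le_ofReal (inv_log_two_mul_inv_fib_mul_fib_add_le m)
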